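/- Let G be a finite simple graph, let l ≥ 1, and let B be a set of cycles of G each of weight exactly l. Then there exists a minimum cycle basis of G containing B if and only if for every nonempty subset D ⊆ B, the sum ⊕_{c ∈ D} c does not lie in the linear span (over ℤ/2ℤ) of the set of cycles of G of weight at most l − 1. -/

import Mathlib

namespace MCBI

variable {V : Type*} [Fintype V] [DecidableEq V]

/-- A *cycle* of a simple graph `G`: a set of edges of `G` such that every vertex of `G`
is incident to an even number of them. -/
def IsCycle (G : SimpleGraph V) (c : Finset (Sym2 V)) : Prop :=
  (↑c : Set (Sym2 V)) ⊆ G.edgeSet ∧ ∀ v : V, Even (c.filter (fun e => v ∈ e)).card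

/-- The `⊕`-sum (GF(2)-sum, i.e. iterated symmetric difference) of a finite set of cycles:
an edge lies in the sum iff it lies in an odd number of the cycles. -/
def cycleSum (D : Finset (Finset (Sym2 V))) : Finset (Sym2 V) :=
  Finset.univ.filter fun e => Odd (D.filter (fun c => e ∈ c)).card

/-- Linear independence over `ℤ/2ℤ`: no nonempty subset sums to the empty cycle. -/
def LinIndep (B : Finset (Finset (Sym2 V))) : Prop :=
  ∀ D ⊆ B, D.Nonempty → cycleSum D ≠ ∅

/-- `B` spans every cycle of `G`. -/
def SpansCycles (G : SimpleGraph V) (B : Finset (Finset (Sym2 V))) : Prop :=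
  ∀ c : Finset (Sym2 V), IsCycle G c → ∃ D ⊆ B, cycleSum D = c

/-- A *cycle basis* of `G`: a linearly independent set of cycles spanning every cycle of `G`. -/
def IsCycleBasis (G : SimpleGraph V) (B : Finset (Finset (Sym2 V))) : Prop :=
  (∀ c ∈ B, IsCycle G c) ∧ LinIndep B ∧ SpansCycles G B

/-- `λ_B(c, d) = 1`: the cycle `c` belongs to a subset of `B` summing to `d`
(the unique such subset when `B` is a basis). -/
def lambdaEq1 (B : Finset (Finset (Sym2 V))) (c d : Finset (Sym2 V)) : Prop :=
  ∃ D ⊆ B, cycleSum D = d ∧ c ∈ D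

/-- Total weight of a set of cycles: the sum of the numbers of edges of its cycles. -/
def weight (B : Finset (Finset (Sym2 V))) : ℕ := ∑ c ∈ B, c.card

/-- A *minimum cycle basis*: a cycle basis of minimum total weight. -/
def IsMCB (G : SimpleGraph V) (B : Finset (Finset (Sym2 V))) : Prop :=
  IsCycleBasis G B ∧
    ∀ B' : Finset (Finset (Sym2 V)), IsCycleBasis G B' → weight B ≤ weight B'

/-- Membership in the `ℤ/2ℤ`-linear span of a set `S` of cycles. -/
def InSpan (S : Set (Finset (Sym2 V))) (c : Finset (Sym2 V)) : Prop :=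
  ∃ D : Finset (Finset (Sym2 V)), (↑D : Set (Finset (Sym2 V))) ⊆ S ∧ cycleSum D = c

/-- The vertices incident to the edges of a cycle. -/
def cycVerts (c : Finset (Sym2 V)) : Finset V :=
  Finset.univ.filter fun v => ∃ e ∈ c, v ∈ e

/-- A finite set of edges forms a connected subgraph: the graph consisting of these edges
together with their endpoints is connected. -/
def EdgesConnected (E : Finset (Sym2 V)) : Prop :=
  ((SimpleGraph.fromEdgeSet (↑E : Set (Sym2 V))).induce {v : V | ∃ e ∈ E, v ∈ e}).Connected

/-- An *elementary cycle*: a nonempty cycle whose edges form a connected subgraph in which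
every incident vertex has degree exactly `2`. -/
def IsElementaryCycle (G : SimpleGraph V) (c : Finset (Sym2 V)) : Prop :=
  IsCycle G c ∧ c.Nonempty ∧
    (∀ v : V, (∃ e ∈ c, v ∈ e) → (c.filter (fun e => v ∈ e)).card = 2) ∧
    EdgesConnected c

/-- The family of independent sets of the matroid `𝓜(G)`: the sets of cycles contained
in some minimum cycle basis of `G`. -/
def matroidIndep (G : SimpleGraph V) : Set (Finset (Finset (Sym2 V))) :=
  {D | ∃ B, IsMCB G B ∧ D ⊆ B}

/-- A set `B` of cycles of the intersection graph `G` is *feasible* for the instance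
`G₁, …, G_k` if for every `i` there is a minimum cycle basis of `Gᵢ` containing `B`. -/
def Feasible {k : ℕ} (Gs : Fin k → SimpleGraph V) (G : SimpleGraph V)
    (B : Finset (Finset (Sym2 V))) : Prop :=
  (∀ c ∈ B, IsCycle G c) ∧ ∀ i : Fin k, ∃ Bi, IsMCB (Gs i) Bi ∧ B ⊆ Bi


/-!
A cycle basis admits exchanges: if `d` occurs in the representation `D` of a cycle `c`
in a basis `B`, then `B - d + c` is again a basis. In a minimum cycle basis this exchange
cannot lower the weight, so every cycle is a sum of basis elements no heavier than itself.

Forward direction: if a minimum cycle basis `B'` contains `B`, the sum of a nonempty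
`D ⊆ B` that lies in the span of the cycles of weight `≤ l - 1` also lies in the span of the
elements of `B'` of weight `≤ l - 1`; by uniqueness of representations in `B'` it is then
represented by those elements, not by the weight-`l` cycles of `D`.

Backward direction: take a minimum cycle basis `B'` sharing as many cycles with `B` as
possible. If `c ∈ B \ B'`, the hypothesis forces the representation of `c` in `B'` to use
some `d ∉ B` of weight `≥ l`; exchanging `d` for `c` gives a minimum cycle basis sharing more
cycles with `B`.
-/

open Finset
open scoped symmDiff

lemma card_symmDiff_add_two_mul_card_inter {α : Type*} [DecidableEq α] (s t : Finset α) :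
    #(s ∆ t) + 2 * #(s ∩ t) = #s + #t := by
  rw [symmDiff_eq_sup_sdiff_inf, sup_eq_union, inf_eq_inter,
    card_sdiff_of_subset (inter_subset_union), ← card_union_add_card_inter s t]
  have := card_le_card (inter_subset_union (s := s) (t := t))
  omega

lemma mem_cycleSum {D : Finset (Finset (Sym2 V))} {e : Sym2 V} :
    e ∈ cycleSum D ↔ Odd #(D.filter (fun c => e ∈ c)) := by
  simp [cycleSum]

lemma cycleSum_singleton (c : Finset (Sym2 V)) : cycleSum {c} = c := by
  ext e
  rw [mem_cycleSum, filter_singleton]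
  split_ifs with h <;> simp [h]

lemma cycleSum_symmDiff (D₁ D₂ : Finset (Finset (Sym2 V))) :
    cycleSum (D₁ ∆ D₂) = cycleSum D₁ ∆ cycleSum D₂ := by
  ext e
  have hfilter : (D₁ ∆ D₂).filter (fun c => e ∈ c)
      = D₁.filter (fun c => e ∈ c) ∆ D₂.filter (fun c => e ∈ c) := by
    ext c; simp only [mem_filter, mem_symmDiff]; tauto
  have hcard := card_symmDiff_add_two_mul_card_inter
    (D₁.filter (fun c => e ∈ c)) (D₂.filter (fun c => e ∈ c))
  rw [mem_symmDiff, mem_cycleSum, mem_cycleSum, mem_cycleSum, hfilter]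
  simp only [Nat.odd_iff] at *
  omega

lemma cycleSum_insert {c : Finset (Sym2 V)} {D : Finset (Finset (Sym2 V))} (h : c ∉ D) :
    cycleSum (insert c D) = c ∆ cycleSum D := by
  rw [insert_eq, ← symmDiff_eq_union (disjoint_singleton_left.2 h), cycleSum_symmDiff,
    cycleSum_singleton]

lemma cycleSum_eq_symmDiff_cycleSum_erase {c : Finset (Sym2 V)} {D : Finset (Finset (Sym2 V))}
    (h : c ∈ D) : cycleSum D = c ∆ cycleSum (D.erase c) := by
  rw [← cycleSum_insert (notMem_erase c D), insert_erase h]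

lemma cycleSum_eq_cycleSum_inter_symmDiff_sdiff (D B : Finset (Finset (Sym2 V))) :
    cycleSum D = cycleSum (D ∩ B) ∆ cycleSum (D \ B) := by
  change cycleSum D = cycleSum (D ⊓ B) ∆ cycleSum (D \ B)
  rw [← cycleSum_symmDiff, disjoint_inf_sdiff.symmDiff_eq_sup, sup_inf_sdiff]

lemma LinIndep.eq_of_cycleSum_eq {B D₁ D₂ : Finset (Finset (Sym2 V))} (hB : LinIndep B)
    (h₁ : D₁ ⊆ B) (h₂ : D₂ ⊆ B) (h : cycleSum D₁ = cycleSum D₂) : D₁ = D₂ := by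
  by_contra hne
  refine hB (D₁ ∆ D₂) (symmDiff_le (le_sup_of_le_right h₁) (le_sup_of_le_right h₂))
    (nonempty_iff_ne_empty.2 fun h' => hne (symmDiff_eq_bot.1 h')) ?_
  rw [cycleSum_symmDiff, h, symmDiff_self]
  rfl

lemma LinIndep.exists_cycleSum_eq_of_not_linIndep_insert {B : Finset (Finset (Sym2 V))}
    {x : Finset (Sym2 V)} (hB : LinIndep B) (hx : ¬ LinIndep (insert x B)) :
    ∃ D ⊆ B, cycleSum D = x := by
  simp only [LinIndep, not_forall, not_not] at hx
  obtain ⟨E, hE, hne, hzero⟩ := hx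
  by_cases hxE : x ∈ E
  · refine ⟨E.erase x, subset_insert_iff.1 hE, ?_⟩
    rw [cycleSum_eq_symmDiff_cycleSum_erase hxE, ← bot_eq_empty, symmDiff_eq_bot] at hzero
    exact hzero.symm
  · exact absurd hzero (hB E ((subset_insert_iff_of_notMem hxE).1 hE) hne)

lemma InSpan.symmDiff {S : Set (Finset (Sym2 V))} {a b : Finset (Sym2 V)}
    (ha : InSpan S a) (hb : InSpan S b) : InSpan S (a ∆ b) := by
  obtain ⟨Da, hDa, rfl⟩ := ha
  obtain ⟨Db, hDb, rfl⟩ := hb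
  refine ⟨Da ∆ Db, fun c hc => ?_, cycleSum_symmDiff Da Db⟩
  rcases mem_symmDiff.1 hc with ⟨hc, -⟩ | ⟨hc, -⟩
  exacts [hDa hc, hDb hc]

lemma inSpan_of_mem {S : Set (Finset (Sym2 V))} {c : Finset (Sym2 V)} (hc : c ∈ S) :
    InSpan S c :=
  ⟨{c}, by simpa using hc, cycleSum_singleton c⟩

lemma inSpan_cycleSum {S : Set (Finset (Sym2 V))} {D : Finset (Finset (Sym2 V))}
    (hD : ∀ c ∈ D, InSpan S c) : InSpan S (cycleSum D) := by
  induction D using Finset.induction_on with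
  | empty => exact ⟨∅, by simp, rfl⟩
  | insert c D hcD ih =>
    rw [forall_mem_insert] at hD
    rw [cycleSum_insert hcD]
    exact hD.1.symmDiff (ih hD.2)

lemma SpansCycles.of_inSpan {G : SimpleGraph V} {B B₁ : Finset (Finset (Sym2 V))}
    (hB : SpansCycles G B) (h : ∀ b ∈ B, InSpan ↑B₁ b) : SpansCycles G B₁ := by
  intro x hx
  obtain ⟨D, hD, rfl⟩ := hB x hx
  obtain ⟨D₁, hD₁, hsum⟩ := inSpan_cycleSum fun b hb => h b (hD hb)
  exact ⟨D₁, coe_subset.1 hD₁, hsum⟩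

lemma IsCycleBasis.exchange {G : SimpleGraph V} {B D : Finset (Finset (Sym2 V))}
    {c d : Finset (Sym2 V)} (hB : IsCycleBasis G B) (hc : IsCycle G c) (hD : D ⊆ B)
    (hsum : cycleSum D = c) (hd : d ∈ D) :
    IsCycleBasis G (insert c (B.erase d)) := by
  obtain ⟨hcyc, hind, hspan⟩ := hB
  refine ⟨(forall_mem_insert _ _ _).2 ⟨hc, fun x hx => hcyc x (mem_of_mem_erase hx)⟩,
    fun E hE hne hzero => ?_, hspan.of_inSpan fun b hb => ?_⟩
  · by_cases hcE : c ∈ E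
    · have hE' : E.erase c ⊆ B.erase d := subset_insert_iff.1 hE
      have hED : E.erase c = D := by
        refine hind.eq_of_cycleSum_eq (hE'.trans (erase_subset d B)) hD ?_
        rw [cycleSum_eq_symmDiff_cycleSum_erase hcE, ← bot_eq_empty, symmDiff_eq_bot] at hzero
        rw [hsum]
        exact hzero.symm
      exact (mem_erase.1 (hE' (hED ▸ hd))).1 rfl
    · exact hind E (((subset_insert_iff_of_notMem hcE).1 hE).trans (erase_subset d B)) hne hzero
  · by_cases hbd : b = d
    · have hcd : c ∆ cycleSum (D.erase d) = d := by
        rw [← hsum, cycleSum_eq_symmDiff_cycleSum_erase hd, symmDiff_symmDiff_cancel_right]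
      have hspan_d := (inSpan_of_mem (mem_insert_self c (B.erase d))).symmDiff
        ⟨D.erase d, fun x hx => mem_insert_of_mem (erase_subset_erase d hD hx), rfl⟩
      rw [hbd]
      rwa [hcd] at hspan_d
    · exact inSpan_of_mem (mem_insert_of_mem (mem_erase.2 ⟨hbd, hb⟩))

omit [Fintype V] in
lemma weight_insert_erase_add {B : Finset (Finset (Sym2 V))} {c d : Finset (Sym2 V)}
    (hcB : c ∉ B) (hdB : d ∈ B) :
    weight (insert c (B.erase d)) + #d = weight B + #c := by
  rw [weight, sum_insert fun h => hcB (mem_of_mem_erase h), weight, ← sum_erase_add B _ hdB]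
  ring

lemma exists_isCycleBasis (G : SimpleGraph V) : ∃ B, IsCycleBasis G B := by
  classical
  obtain ⟨B, hB, hmax⟩ := exists_max_image
    (univ.filter fun B : Finset (Finset (Sym2 V)) => (∀ c ∈ B, IsCycle G c) ∧ LinIndep B) card
    ⟨∅, mem_filter.2 ⟨mem_univ _, by simp, fun D hD hne => absurd (subset_empty.1 hD) hne.ne_empty⟩⟩
  obtain ⟨-, hcyc, hind⟩ := mem_filter.1 hB
  refine ⟨B, hcyc, hind, fun x hx => ?_⟩
  by_cases hxB : x ∈ B
  · exact ⟨{x}, singleton_subset_iff.2 hxB, cycleSum_singleton x⟩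
  refine hind.exists_cycleSum_eq_of_not_linIndep_insert fun hind' => ?_
  have := hmax (insert x B)
    (mem_filter.2 ⟨mem_univ _, (forall_mem_insert _ _ _).2 ⟨hx, hcyc⟩, hind'⟩)
  rw [card_insert_of_notMem hxB] at this
  omega

lemma exists_isMCB (G : SimpleGraph V) : ∃ B, IsMCB G B := by
  classical
  obtain ⟨B₀, hB₀⟩ := exists_isCycleBasis G
  obtain ⟨B, hB, hmin⟩ := exists_min_image
    ({B | IsCycleBasis G B} : Finset (Finset (Finset (Sym2 V)))) weight ⟨B₀, by simpa using hB₀⟩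
  exact ⟨B, (mem_filter.1 hB).2, fun B' hB' => hmin B' (by simpa using hB')⟩

lemma IsMCB.card_le_of_mem {G : SimpleGraph V} {B D : Finset (Finset (Sym2 V))}
    {c d : Finset (Sym2 V)} (hB : IsMCB G B) (hc : IsCycle G c) (hD : D ⊆ B)
    (hsum : cycleSum D = c) (hd : d ∈ D) : #d ≤ #c := by
  by_cases hcB : c ∈ B
  · have : D = {c} := hB.1.2.1.eq_of_cycleSum_eq hD (singleton_subset_iff.2 hcB)
      (by rw [hsum, cycleSum_singleton])
    rw [this, mem_singleton] at hd
    rw [hd]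
  · have := hB.2 _ (hB.1.exchange hc hD hsum hd)
    have := weight_insert_erase_add hcB (hD hd)
    omega

lemma IsMCB.exchange {G : SimpleGraph V} {B D : Finset (Finset (Sym2 V))}
    {c d : Finset (Sym2 V)} (hB : IsMCB G B) (hc : IsCycle G c) (hcB : c ∉ B)
    (hD : D ⊆ B) (hsum : cycleSum D = c) (hd : d ∈ D) (hcd : #c ≤ #d) :
    IsMCB G (insert c (B.erase d)) := by
  refine ⟨hB.1.exchange hc hD hsum hd, fun B' hB' => ?_⟩
  have := hB.2 B' hB'
  have := weight_insert_erase_add hcB (hD hd)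
  omega

lemma IsMCB.inSpan_of_inSpan_light {G : SimpleGraph V} {B : Finset (Finset (Sym2 V))}
    {k : ℕ} {x : Finset (Sym2 V)} (hB : IsMCB G B)
    (hx : InSpan {c | IsCycle G c ∧ #c ≤ k} x) : InSpan {d | d ∈ B ∧ #d ≤ k} x := by
  obtain ⟨S, hS, rfl⟩ := hx
  refine inSpan_cycleSum fun s hs => ?_
  obtain ⟨hs, hsk⟩ := hS hs
  obtain ⟨Ds, hDs, hsum⟩ := hB.1.2.2 s hs
  exact ⟨Ds, fun d hd => ⟨hDs hd, (hB.card_le_of_mem hs hDs hsum hd).trans hsk⟩, hsum⟩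

lemma not_inSpan_of_subset_isMCB {G : SimpleGraph V} {l : ℕ} (hl : 1 ≤ l)
    {B B' D : Finset (Finset (Sym2 V))} (hB : ∀ c ∈ B, #c = l) (hB' : IsMCB G B')
    (hBB' : B ⊆ B') (hD : D ⊆ B) (hne : D.Nonempty) :
    ¬ InSpan {c | IsCycle G c ∧ #c ≤ l - 1} (cycleSum D) := by
  intro hspan
  obtain ⟨E, hE, hsum⟩ := hB'.inSpan_of_inSpan_light hspan
  have hED : E = D := hB'.1.2.1.eq_of_cycleSum_eq (fun d hd => (hE hd).1) (hD.trans hBB') hsum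
  obtain ⟨c, hc⟩ := hne
  have := (hE (hED ▸ hc : c ∈ E)).2
  have := hB c (hD hc)
  omega

lemma exists_mem_not_mem_le_card_of_not_inSpan {G : SimpleGraph V} {l : ℕ}
    {B D : Finset (Finset (Sym2 V))} {c : Finset (Sym2 V)}
    (hsmall : ∀ D ⊆ B, D.Nonempty → ¬ InSpan {c | IsCycle G c ∧ #c ≤ l - 1} (cycleSum D))
    (hcB : c ∈ B) (hcD : c ∉ D) (hD : ∀ d ∈ D, IsCycle G d) (hsum : cycleSum D = c) :
    ∃ d ∈ D, d ∉ B ∧ l ≤ #d := by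
  by_contra! hshort
  -- `c + ∑ (D ∩ B) = ∑ (D \ B)` writes a sum of elements of `B` with light cycles
  refine hsmall (insert c (D ∩ B)) (insert_subset hcB inter_subset_right) (insert_nonempty _ _)
    ⟨D \ B, fun d hd => ?_, ?_⟩
  · obtain ⟨hdD, hdB⟩ := mem_sdiff.1 hd
    exact ⟨hD d hdD, by have := hshort d hdD hdB; omega⟩
  · rw [cycleSum_insert fun h => hcD (mem_inter.1 h).1, ← hsum,
      cycleSum_eq_cycleSum_inter_symmDiff_sdiff D B, symmDiff_symmDiff_self']

lemma exists_isMCB_superset_of_not_inSpan {G : SimpleGraph V} {l : ℕ}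
    {B : Finset (Finset (Sym2 V))} (hB : ∀ c ∈ B, IsCycle G c ∧ #c = l)
    (hsmall : ∀ D ⊆ B, D.Nonempty → ¬ InSpan {c | IsCycle G c ∧ #c ≤ l - 1} (cycleSum D)) :
    ∃ B', IsMCB G B' ∧ B ⊆ B' := by
  classical
  obtain ⟨B₀, hB₀⟩ := exists_isMCB G
  obtain ⟨B', hB'mem, hmax⟩ := exists_max_image
    ({B' | IsMCB G B'} : Finset (Finset (Finset (Sym2 V)))) (fun B' => #(B ∩ B'))
    ⟨B₀, by simpa using hB₀⟩
  have hB' : IsMCB G B' := (mem_filter.1 hB'mem).2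
  refine ⟨B', hB', fun c hcB => by_contra fun hcB' => ?_⟩
  obtain ⟨D, hD, hsum⟩ := hB'.1.2.2 c (hB c hcB).1
  obtain ⟨d, hdD, hdB, hld⟩ := exists_mem_not_mem_le_card_of_not_inSpan hsmall hcB
    (fun h => hcB' (hD h)) (fun d hd => hB'.1.1 d (hD hd)) hsum
  have hexch := hB'.exchange (hB c hcB).1 hcB' hD hsum hdD ((hB c hcB).2.trans_le hld)
  have hgrow : insert c (B ∩ B') ⊆ B ∩ insert c (B'.erase d) := by
    refine insert_subset (mem_inter.2 ⟨hcB, mem_insert_self _ _⟩) fun x hx => ?_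
    obtain ⟨hxB, hxB'⟩ := mem_inter.1 hx
    exact mem_inter.2 ⟨hxB, mem_insert_of_mem (mem_erase.2 ⟨fun h => hdB (h ▸ hxB), hxB'⟩)⟩
  have hlt : #(B ∩ B') < #(B ∩ insert c (B'.erase d)) :=
    (card_lt_card (ssubset_insert fun h => hcB' (mem_inter.1 h).2)).trans_le (card_le_card hgrow)
  exact (hmax _ (by simpa using hexch)).not_gt hlt

/-- Let `l ≥ 1` and let `B` be a set of cycles of `G`, each of weight
exactly `l`. Then `B` extends to a minimum cycle basis of `G` iff no nonempty subset of `B`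
has its `⊕`-sum in the `ℤ/2ℤ`-span of the cycles of `G` of weight at most `l - 1`. -/
theorem extends_to_mcb_iff_no_small_span (G : SimpleGraph V) (l : ℕ) (hl : 1 ≤ l)
    (B : Finset (Finset (Sym2 V))) (hB : ∀ c ∈ B, IsCycle G c ∧ c.card = l) :
    (∃ B' : Finset (Finset (Sym2 V)), IsMCB G B' ∧ B ⊆ B') ↔
      ∀ D ⊆ B, D.Nonempty →
        ¬ InSpan {c : Finset (Sym2 V) | IsCycle G c ∧ c.card ≤ l - 1} (cycleSum D) := by
  refine ⟨fun ⟨B', hB', hBB'⟩ D hD hne => ?_, exists_isMCB_superset_of_not_inSpan hB⟩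
  exact not_inSpan_of_subset_isMCB hl (fun c hc => (hB c hc).2) hB' hBB' hD hne

end MCBI
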